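/- arXiv:2211.04627 — 2 statements merged into one kernel-verified Lean document; each statement's English description precedes it below -/
import Mathlib

section
/- Let G be a finite simple graph on vertex set V and let k be a natural number. Then the number of edges {u, v} of G with min(c(u), c(v)) = k (i.e., one endpoint has core number exactly k and the other has core number at least k) is at most k times the number of vertices with core number exactly k. -/
/-!
Let `A` be the vertices of core number `k` and `B` those of core number at least `k + 1`.
Every vertex of `B` has at least `k + 1` neighbours in `B`, so any nonempty `A' ⊆ A` contains
a vertex with at most `k` neighbours in `A' ∪ B`: otherwise `A' ∪ B` would witness core number
`k + 1` for the vertices of `A'`. Peeling such vertices off `A` one at a time, each removal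
destroys at most `k` of the edges inside `A ∪ B` that meet `A`, and these include all edges
whose endpoints have minimum core number `k`.
-/

/-- The core number of a vertex `v`: the largest `k` such that there is a set `S` of vertices
containing `v` in which every vertex has at least `k` neighbors inside `S`. -/
noncomputable def coreNumber {V : Type*} [Fintype V] [DecidableEq V]
    (G : SimpleGraph V) [DecidableRel G.Adj] (v : V) : ℕ :=
  sSup {k : ℕ | ∃ S : Finset V, v ∈ S ∧ ∀ u ∈ S, k ≤ (S.filter (G.Adj u)).card}

open Finset

namespace SimpleGraph

variable {V : Type*} (G : SimpleGraph V) [DecidableRel G.Adj]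

section Peeling

variable [DecidableEq V] [Fintype G.edgeSet]

lemma card_incidence_le_card_adj (v : V) (s : Finset V) :
    #{e ∈ G.edgeFinset ∩ s.sym2 | v ∈ e} ≤ #{w ∈ s | G.Adj v w} := by
  refine (card_le_card fun e he ↦ ?_).trans (card_image_le (f := fun w ↦ s(v, w)))
  obtain ⟨heG, hv⟩ := mem_filter.1 he
  obtain ⟨w, rfl⟩ := Sym2.mem_iff_exists.1 hv
  rw [mem_inter, mem_edgeFinset, mem_sym2_iff] at heG
  exact mem_image.2 ⟨w, mem_filter.2 ⟨heG.2 w (Sym2.mem_mk_right v w), heG.1⟩, rfl⟩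

lemma card_edges_meeting_le_mul_card (k : ℕ) (B A : Finset V)
    (hpeel : ∀ A' ⊆ A, A'.Nonempty → ∃ v ∈ A', #{w ∈ A' ∪ B | G.Adj v w} ≤ k) :
    #{e ∈ G.edgeFinset ∩ (A ∪ B).sym2 | ∃ a ∈ A, a ∈ e} ≤ k * #A := by
  induction A using Finset.strongInduction with
  | _ A ih =>
  rcases A.eq_empty_or_nonempty with rfl | hA
  · simp
  obtain ⟨v, hvA, hv⟩ := hpeel A Subset.rfl hA
  have hsplit : {e ∈ G.edgeFinset ∩ (A ∪ B).sym2 | ∃ a ∈ A, a ∈ e} ⊆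
      {e ∈ G.edgeFinset ∩ (A ∪ B).sym2 | v ∈ e} ∪
        {e ∈ G.edgeFinset ∩ (A.erase v ∪ B).sym2 | ∃ a ∈ A.erase v, a ∈ e} := by
    intro e he
    simp only [mem_union, mem_filter, mem_inter, mem_sym2_iff, mem_erase] at he ⊢
    obtain ⟨⟨heG, heAB⟩, a, haA, hae⟩ := he
    by_cases hve : v ∈ e
    · exact .inl ⟨⟨heG, heAB⟩, hve⟩
    have hne : ∀ x ∈ e, x ≠ v := fun x hx hxv ↦ hve (hxv ▸ hx)
    exact .inr ⟨⟨heG, fun x hx ↦ (heAB x hx).imp_left (⟨hne x hx, ·⟩)⟩,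
      a, ⟨hne a hae, haA⟩, hae⟩
  have hrest := ih (A.erase v) (erase_ssubset hvA) fun A' hA' ↦
    hpeel A' (hA'.trans (erase_subset v A))
  have hcard : #(A.erase v) + 1 = #A := card_erase_add_one hvA
  calc _ ≤ #{w ∈ A ∪ B | G.Adj v w} + k * #(A.erase v) :=
        (card_le_card hsplit).trans <| (card_union_le _ _).trans <|
          add_le_add (G.card_incidence_le_card_adj v _) hrest
    _ ≤ k + k * #(A.erase v) := by gcongr
    _ = k * #A := by rw [← hcard]; ring

end Peeling

variable [Fintype V]

lemma bddAbove_coreNumber_set (v : V) :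
    BddAbove {k : ℕ | ∃ S : Finset V, v ∈ S ∧ ∀ u ∈ S, k ≤ #{w ∈ S | G.Adj u w}} :=
  ⟨Fintype.card V, fun _ ⟨S, hv, hS⟩ ↦
    (hS v hv).trans ((card_filter_le _ _).trans (card_le_univ S))⟩

variable [DecidableEq V]

noncomputable def core (m : ℕ) : Finset V := {w | m ≤ coreNumber G w}

lemma mem_core {m : ℕ} {w : V} : w ∈ G.core m ↔ m ≤ coreNumber G w := by simp [core]

lemma le_coreNumber {v : V} {k : ℕ} (S : Finset V) (hv : v ∈ S)
    (hS : ∀ u ∈ S, k ≤ #{w ∈ S | G.Adj u w}) : k ≤ coreNumber G v :=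
  le_csSup (G.bddAbove_coreNumber_set v) ⟨S, hv, hS⟩

lemma exists_coreNumber_le_card_adj (v : V) :
    ∃ S : Finset V, v ∈ S ∧ ∀ u ∈ S, coreNumber G v ≤ #{w ∈ S | G.Adj u w} :=
  Nat.sSup_mem (s := {k : ℕ | ∃ S : Finset V, v ∈ S ∧ ∀ u ∈ S, k ≤ #{w ∈ S | G.Adj u w}})
    ⟨0, {v}, mem_singleton_self v, fun _ _ ↦ Nat.zero_le _⟩
    (G.bddAbove_coreNumber_set v)

lemma le_card_adj_of_le_coreNumber {m : ℕ} {u : V} (hu : m ≤ coreNumber G u) :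
    m ≤ #{w ∈ G.core m | G.Adj u w} := by
  obtain ⟨S, huS, hS⟩ := G.exists_coreNumber_le_card_adj u
  have hsub : S ⊆ G.core m := fun w hw ↦ G.mem_core.2 (hu.trans (G.le_coreNumber S hw hS))
  calc m ≤ #{w ∈ S | G.Adj u w} := hu.trans (hS u huS)
    _ ≤ _ := card_le_card (filter_subset_filter _ hsub)

lemma exists_card_adj_le_of_coreNumber_eq (k : ℕ) (A' : Finset V) (hA' : A'.Nonempty)
    (hcore : ∀ v ∈ A', coreNumber G v = k) :
    ∃ v ∈ A', #{w ∈ A' ∪ G.core (k + 1) | G.Adj v w} ≤ k := by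
  by_contra! hdeg
  obtain ⟨v, hv⟩ := hA'
  have : k + 1 ≤ coreNumber G v := by
    refine G.le_coreNumber (A' ∪ G.core (k + 1)) (mem_union_left _ hv) fun u hu ↦ ?_
    rcases mem_union.1 hu with hu | hu
    · exact hdeg u hu
    · exact (G.le_card_adj_of_le_coreNumber (G.mem_core.1 hu)).trans
        (card_le_card (filter_subset_filter _ subset_union_right))
  exact absurd (hcore v hv) (by omega)

end SimpleGraph

/-- The number of edges whose endpoints' minimum core number is exactly `k` (one endpoint has
core number exactly `k` and the other at least `k`) is at most `k` times the number of
vertices with core number exactly `k`. -/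
theorem outcore_le_k_mul_core {V : Type*} [Fintype V] [DecidableEq V]
    (G : SimpleGraph V) [DecidableRel G.Adj] (k : ℕ) :
    {e ∈ G.edgeSet | ∃ u v : V, e = s(u, v) ∧
        min (coreNumber G u) (coreNumber G v) = k}.ncard
      ≤ k * {v : V | coreNumber G v = k}.ncard := by
  set A : Finset V := {v | coreNumber G v = k}
  have hA : {v : V | coreNumber G v = k} = A := by ext; simp [A]
  have hsub : {e ∈ G.edgeSet | ∃ u v : V, e = s(u, v) ∧
      min (coreNumber G u) (coreNumber G v) = k} ⊆
      ↑{e ∈ G.edgeFinset ∩ (A ∪ G.core (k + 1)).sym2 | ∃ a ∈ A, a ∈ e} := by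
    rintro _ ⟨he, u, v, rfl, hmin⟩
    have hAB : ∀ x, k ≤ coreNumber G x → x ∈ A ∪ G.core (k + 1) := fun x hx ↦ by
      rw [mem_union, G.mem_core, mem_filter_univ]; omega
    simp only [coe_filter, Set.mem_ofPred_eq, mem_inter, G.mem_edgeFinset, mem_sym2_iff]
    refine ⟨⟨he, fun x hx ↦ hAB x ?_⟩, ?_⟩
    · rcases Sym2.mem_iff.1 hx with rfl | rfl <;> omega
    · rcases min_choice (coreNumber G u) (coreNumber G v) with h | h
      · exact ⟨u, (mem_filter_univ u).2 (h.symm.trans hmin), Sym2.mem_mk_left u v⟩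
      · exact ⟨v, (mem_filter_univ v).2 (h.symm.trans hmin), Sym2.mem_mk_right u v⟩
  rw [hA, Set.ncard_coe_finset]
  refine (Set.ncard_le_ncard hsub).trans ?_
  rw [Set.ncard_coe_finset]
  exact G.card_edges_meeting_le_mul_card k _ A fun A' hA' hne ↦
    G.exists_card_adj_le_of_coreNumber_eq k A' hne fun v hv ↦ by simpa [A] using hA' hv
end

section
/- Let G be a finite simple graph on vertex set V and let k be a natural number. Then the number of edges of G having at least one endpoint with core number at most k is at most k times the number of vertices with core number at most k. -/
set_option linter.unusedSectionVars false

section aux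
variable {V : Type*} [Fintype V] [DecidableEq V] (G : SimpleGraph V) [DecidableRel G.Adj]

lemma coreSet_bdd (v : V) :
    BddAbove {k : ℕ | ∃ S : Finset V, v ∈ S ∧ ∀ u ∈ S, k ≤ (S.filter (G.Adj u)).card} := by
  refine ⟨Fintype.card V, fun j hj => ?_⟩
  obtain ⟨S, hv, hS⟩ := hj
  exact le_trans (hS v hv) (le_trans (Finset.card_filter_le _ _) (Finset.card_le_univ S))

lemma coreNumber_spec (v : V) :
    ∃ S : Finset V, v ∈ S ∧ ∀ u ∈ S, coreNumber G v ≤ (S.filter (G.Adj u)).card := by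
  have h := Nat.sSup_mem (s := {k : ℕ | ∃ S : Finset V, v ∈ S ∧ ∀ u ∈ S, k ≤ (S.filter (G.Adj u)).card})
    ⟨0, {v}, Finset.mem_singleton_self v, fun u _ => Nat.zero_le _⟩ (coreSet_bdd G v)
  exact h

lemma le_coreNumber {m : ℕ} {v : V} {S : Finset V} (hv : v ∈ S)
    (h : ∀ u ∈ S, m ≤ (S.filter (G.Adj u)).card) : m ≤ coreNumber G v :=
  le_csSup (coreSet_bdd G v) ⟨S, hv, h⟩

open Classical in
noncomputable def bigCore (k : ℕ) : Finset V :=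
  Finset.univ.filter (fun v => k + 1 ≤ coreNumber G v)

open Classical in
lemma bigCore_deg (k : ℕ) {u : V} (hu : u ∈ bigCore G k) :
    k + 1 ≤ ((bigCore G k).filter (G.Adj u)).card := by
  have hcore : k + 1 ≤ coreNumber G u := (Finset.mem_filter.mp hu).2
  obtain ⟨S, huS, hS⟩ := coreNumber_spec G u
  have hsub : S ⊆ bigCore G k := by
    intro w hw
    simp only [bigCore, Finset.mem_filter, Finset.mem_univ, true_and]
    exact le_coreNumber G hw (fun x hx => le_trans hcore (hS x hx))
  calc k + 1 ≤ coreNumber G u := hcore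
    _ ≤ (S.filter (G.Adj u)).card := hS u huS
    _ ≤ ((bigCore G k).filter (G.Adj u)).card :=
        Finset.card_le_card (Finset.filter_subset_filter _ hsub)

open Classical in
lemma peel (k : ℕ) (T : Finset V) (hT : ∀ v ∈ T, coreNumber G v ≤ k) (hne : T.Nonempty) :
    ∃ v ∈ T, ((bigCore G k ∪ T).filter (G.Adj v)).card ≤ k := by
  by_contra hcon
  push_neg at hcon
  obtain ⟨v, hv⟩ := hne
  have : k + 1 ≤ coreNumber G v := by
    refine le_coreNumber G (S := bigCore G k ∪ T) (Finset.mem_union_right _ hv) ?_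
    intro u hu
    rcases Finset.mem_union.mp hu with h | h
    · exact le_trans (bigCore_deg G k h)
        (Finset.card_le_card (Finset.filter_subset_filter _ Finset.subset_union_left))
    · exact hcon u h
  exact absurd (hT v hv) (by omega)

open Classical in
lemma main_count (k : ℕ) (T : Finset V) (hT : ∀ v ∈ T, coreNumber G v ≤ k) :
    (G.edgeFinset.filter
      (fun e => ∃ a b, e = s(a,b) ∧ a ∈ T ∧ b ∈ bigCore G k ∪ T)).card ≤ k * T.card := by
  induction T using Finset.strongInduction with
  | _ T ih =>
    rcases T.eq_empty_or_nonempty with rfl | hne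
    · simp
    · obtain ⟨v, hvT, hdeg⟩ := peel G k T hT hne
      set N := (bigCore G k ∪ T).filter (G.Adj v) with hN
      set T' := T.erase v with hT'
      have hsub : G.edgeFinset.filter
          (fun e => ∃ a b, e = s(a,b) ∧ a ∈ T ∧ b ∈ bigCore G k ∪ T) ⊆
          (G.edgeFinset.filter
            (fun e => ∃ a b, e = s(a,b) ∧ a ∈ T' ∧ b ∈ bigCore G k ∪ T')) ∪
          N.image (fun w => s(v, w)) := by
        intro e he
        obtain ⟨heE, a, b, rfl, haT, hb⟩ := Finset.mem_filter.mp he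
        have hadj : G.Adj a b := by
          rw [SimpleGraph.mem_edgeFinset, SimpleGraph.mem_edgeSet] at heE
          exact heE
        by_cases hav : a = v
        · subst hav
          refine Finset.mem_union_right _ (Finset.mem_image.mpr ⟨b, ?_, rfl⟩)
          exact Finset.mem_filter.mpr ⟨hb, hadj⟩
        · by_cases hbv : b = v
          · subst hbv
            refine Finset.mem_union_right _ (Finset.mem_image.mpr ⟨a, ?_, ?_⟩)
            · exact Finset.mem_filter.mpr ⟨Finset.mem_union_right _ haT, hadj.symm⟩
            · exact Sym2.eq_swap
          · refine Finset.mem_union_left _ (Finset.mem_filter.mpr ⟨heE, a, b, rfl, ?_, ?_⟩)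
            · exact Finset.mem_erase.mpr ⟨hav, haT⟩
            · rcases Finset.mem_union.mp hb with h | h
              · exact Finset.mem_union_left _ h
              · exact Finset.mem_union_right _ (Finset.mem_erase.mpr ⟨hbv, h⟩)
      have hcard : (N.image (fun w => s(v, w))).card ≤ k :=
        le_trans Finset.card_image_le hdeg
      have hih := ih T' (Finset.erase_ssubset hvT) (fun w hw => hT w (Finset.mem_of_mem_erase hw))
      calc (G.edgeFinset.filter
          (fun e => ∃ a b, e = s(a,b) ∧ a ∈ T ∧ b ∈ bigCore G k ∪ T)).card
          ≤ _ := Finset.card_le_card hsub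
        _ ≤ (G.edgeFinset.filter
              (fun e => ∃ a b, e = s(a,b) ∧ a ∈ T' ∧ b ∈ bigCore G k ∪ T')).card
            + (N.image (fun w => s(v, w))).card := Finset.card_union_le _ _
        _ ≤ k * T'.card + k := Nat.add_le_add hih hcard
        _ = k * (T'.card + 1) := by ring
        _ = k * T.card := by rw [Finset.card_erase_add_one hvT]

end aux

/-- The number of edges having at least one endpoint with core number at most `k` is at most
`k` times the number of vertices with core number at most `k`. -/
theorem edges_incident_low_core_le {V : Type*} [Fintype V] [DecidableEq V]
    (G : SimpleGraph V) [DecidableRel G.Adj] (k : ℕ) :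
    {e ∈ G.edgeSet | ∃ u ∈ e, coreNumber G u ≤ k}.ncard
      ≤ k * {v : V | coreNumber G v ≤ k}.ncard := by
  classical
  set L : Finset V := Finset.univ.filter (fun v => coreNumber G v ≤ k) with hL
  have hunion : bigCore G k ∪ L = Finset.univ := by
    ext v
    simp only [bigCore, hL, Finset.mem_union, Finset.mem_filter, Finset.mem_univ, true_and,
      iff_true]
    omega
  have hset1 : {e ∈ G.edgeSet | ∃ u ∈ e, coreNumber G u ≤ k} =
      ↑(G.edgeFinset.filter (fun e => ∃ a b, e = s(a,b) ∧ a ∈ L ∧ b ∈ bigCore G k ∪ L)) := by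
    ext e
    simp only [Set.mem_setOf_eq, Finset.coe_filter, SimpleGraph.mem_edgeFinset, hunion,
      Finset.mem_univ, and_true]
    refine and_congr_right fun heE => ?_
    induction e with
    | _ x y =>
      constructor
      · rintro ⟨u, hu, hcu⟩
        rcases Sym2.mem_iff.mp hu with rfl | rfl
        · exact ⟨u, y, rfl, Finset.mem_filter.mpr ⟨Finset.mem_univ _, hcu⟩⟩
        · exact ⟨u, x, Sym2.eq_swap, Finset.mem_filter.mpr ⟨Finset.mem_univ _, hcu⟩⟩
      · rintro ⟨a, b, hab, haL⟩
        exact ⟨a, hab ▸ Sym2.mem_mk_left a b, (Finset.mem_filter.mp haL).2⟩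
  have hset2 : {v : V | coreNumber G v ≤ k} = ↑L := by
    ext v; simp [hL]
  rw [hset1, hset2, Set.ncard_coe_finset, Set.ncard_coe_finset]
  exact main_count G k L (fun v hv => (Finset.mem_filter.mp hv).2)
end
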